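/- arXiv:2301.09845 — 4 statements merged into one kernel-verified Lean document; each statement's English description precedes it below -/
import Mathlib

section
/- Let m be an odd positive integer. For every odd positive integer n, the number of partitions of n all of whose parts are at least m, in which the number of odd parts and the number of even parts are both odd and the number of odd parts exceeds the number of even parts, is at least the number of partitions of n all of whose parts are at least m, in which the number of odd parts and the number of even parts are both odd and the number of even parts exceeds the number of odd parts; that is, O_mo(n) ≥ E_mo(n). -/
/-- The number of partitions of `n` with every part at least `m` in which the
number of even parts and the number of odd parts are both odd, and the number
of even parts exceeds the number of odd parts. -/
noncomputable def Emo (m n : ℕ) : ℕ :=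
  Set.ncard {p : n.Partition | (∀ i ∈ p.parts, m ≤ i) ∧
    Odd (p.parts.countP (fun i => Even i)) ∧ Odd (p.parts.countP (fun i => Odd i)) ∧
    p.parts.countP (fun i => Even i) > p.parts.countP (fun i => Odd i)}

/-- The number of partitions of `n` with every part at least `m` in which the
number of even parts and the number of odd parts are both odd, and the number
of odd parts exceeds the number of even parts. -/
noncomputable def Omo (m n : ℕ) : ℕ :=
  Set.ncard {p : n.Partition | (∀ i ∈ p.parts, m ≤ i) ∧
    Odd (p.parts.countP (fun i => Even i)) ∧ Odd (p.parts.countP (fun i => Odd i)) ∧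
    p.parts.countP (fun i => Odd i) > p.parts.countP (fun i => Even i)}

/-!
Subtracting 1 from every even part and adding 1 to every odd part swaps the parities of all
parts: a partition with `b` even and `a` odd parts, `a < b` both odd, becomes one with `b` odd and
`a` even parts, whose sum has dropped by `b - a`. This difference is even, so adding it to a
largest of the new odd parts keeps that part odd and restores the sum; the bumped part is still
a largest one, so the whole construction can be undone. Since `m` is odd, every even part is at
least `m + 1`, so all parts stay at least `m`.
-/

namespace Multiset

theorem sup_mem_of_ne_zero {α : Type*} [LinearOrder α] [OrderBot α] {s : Multiset α}
    (hs : s ≠ 0) : s.sup ∈ s := by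
  induction s using Multiset.induction with
  | empty => exact absurd rfl hs
  | cons a t ih =>
    rw [sup_cons]
    rcases eq_or_ne t 0 with rfl | ht
    · simp
    rcases le_total a t.sup with h | h
    · rw [sup_of_le_right h]
      exact mem_cons_of_mem (ih ht)
    · rw [sup_of_le_left h]
      exact mem_cons_self _ _

theorem sum_map_add_one (s : Multiset ℕ) : (s.map (· + 1)).sum = s.sum + card s := by
  rw [sum_map_add, map_id', map_const', sum_replicate, smul_eq_mul, mul_one]

theorem map_add_one_map_sub_one {s : Multiset ℕ} (hs : ∀ i ∈ s, 0 < i) :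
    (s.map (· - 1)).map (· + 1) = s := by
  rw [map_map]
  conv_rhs => rw [← map_id s]
  exact map_congr rfl fun i hi => Nat.sub_add_cancel (hs i hi)

theorem filter_even_add_filter_odd (s : Multiset ℕ) : s.filter Even + s.filter Odd = s := by
  simpa only [Nat.not_even_iff_odd] using filter_add_not Even s

def addToMax (s : Multiset ℕ) (k : ℕ) : Multiset ℕ :=
  (s.sup + k) ::ₘ s.erase s.sup

variable {s t : Multiset ℕ} {k : ℕ}

theorem mem_addToMax {x : ℕ} (hx : x ∈ s.addToMax k) : x = s.sup + k ∨ x ∈ s :=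
  (mem_cons.1 hx).imp_right mem_of_mem_erase

theorem card_addToMax (hs : s ≠ 0) : card (s.addToMax k) = card s := by
  rw [addToMax, card_cons, ← card_cons s.sup, cons_erase (sup_mem_of_ne_zero hs)]

theorem sum_addToMax (hs : s ≠ 0) : (s.addToMax k).sum = s.sum + k := by
  conv_rhs => rw [← cons_erase (sup_mem_of_ne_zero hs)]
  rw [addToMax, sum_cons, sum_cons]
  omega

theorem sup_addToMax : (s.addToMax k).sup = s.sup + k := by
  rw [addToMax, sup_cons]
  exact sup_of_le_left ((sup_mono fun _ => mem_of_mem_erase).trans le_self_add)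

theorem eq_of_addToMax_eq (hs : s ≠ 0) (ht : t ≠ 0) (h : s.addToMax k = t.addToMax k) :
    s = t := by
  have hsup : s.sup = t.sup := by
    simpa only [sup_addToMax, Nat.add_right_cancel_iff] using congrArg sup h
  have herase : s.erase s.sup = t.erase t.sup := by
    simpa only [addToMax, hsup, erase_cons_head] using congrArg (·.erase (t.sup + k)) h
  rw [← cons_erase (sup_mem_of_ne_zero hs), ← cons_erase (sup_mem_of_ne_zero ht), herase, hsup]

end Multiset

theorem Nat.Partition.ncard_le_ncard_of_injOn {n : ℕ} {P Q : Multiset ℕ → Prop}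
    (f : Multiset ℕ → Multiset ℕ)
    (hf : ∀ s, P s → Q (f s) ∧ (∀ i ∈ f s, 0 < i) ∧ (f s).sum = s.sum)
    (hinj : Set.InjOn f {s | P s}) :
    {p : n.Partition | P p.parts}.ncard ≤ {p : n.Partition | Q p.parts}.ncard := by
  have hparts : Function.Injective (Nat.Partition.parts : n.Partition → Multiset ℕ) :=
    fun _ _ => Nat.Partition.ext
  rw [← Set.ncard_image_of_injective _ hparts, ← Set.ncard_image_of_injective _ hparts]
  refine Set.ncard_le_ncard_of_injOn f ?_ (hinj.mono ?_) ((Set.toFinite _).image _)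
  · rintro _ ⟨p, hp, rfl⟩
    obtain ⟨hq, hpos, hsum⟩ := hf p.parts hp
    exact ⟨⟨f p.parts, hpos _, hsum.trans p.parts_sum⟩, hq, rfl⟩
  · rintro _ ⟨p, hp, rfl⟩
    exact hp

open Multiset

section swapParity

def swapParity (s : Multiset ℕ) : Multiset ℕ :=
  ((s.filter Even).map (· - 1)).addToMax (s.countP Even - s.countP Odd) +
    (s.filter Odd).map (· + 1)

variable {s : Multiset ℕ}

theorem map_sub_one_filter_even_ne_zero (hE : Odd (s.countP Even)) :
    (s.filter Even).map (· - 1) ≠ 0 := by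
  rw [Ne, map_eq_zero, ← card_eq_zero, ← countP_eq_card_filter]
  exact hE.pos.ne'

theorem filter_swapParity (hpos : ∀ i ∈ s, 0 < i) (hE : Odd (s.countP Even))
    (hO : Odd (s.countP Odd)) :
    (swapParity s).filter Odd =
        ((s.filter Even).map (· - 1)).addToMax (s.countP Even - s.countP Odd) ∧
      (swapParity s).filter Even = (s.filter Odd).map (· + 1) := by
  have hshift : ∀ x ∈ (s.filter Even).map (· - 1), Odd x := by
    simp only [mem_map, mem_filter]
    rintro _ ⟨e, ⟨he, heven⟩, rfl⟩
    exact Nat.Even.sub_odd (hpos e he) heven odd_one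
  have hexcess : Even (s.countP Even - s.countP Odd) := by
    rw [Nat.odd_iff] at hE hO
    rw [Nat.even_iff]
    omega
  have hodd : ∀ x ∈ ((s.filter Even).map (· - 1)).addToMax (s.countP Even - s.countP Odd),
      Odd x := by
    intro x hx
    rcases mem_addToMax hx with rfl | hx
    · exact (hshift _ (sup_mem_of_ne_zero (map_sub_one_filter_even_ne_zero hE))).add_even hexcess
    · exact hshift x hx
  have heven : ∀ x ∈ (s.filter Odd).map (· + 1), Even x := by
    simp only [mem_map, mem_filter]
    rintro _ ⟨o, ⟨-, ho⟩, rfl⟩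
    exact ho.add_one
  constructor
  · rw [swapParity, filter_add, filter_eq_self.2 hodd,
      filter_eq_nil.2 fun x hx => Nat.not_odd_iff_even.2 (heven x hx), add_zero]
  · rw [swapParity, filter_add, filter_eq_self.2 heven,
      filter_eq_nil.2 fun x hx => Nat.not_even_iff_odd.2 (hodd x hx), zero_add]

theorem countP_odd_swapParity (hpos : ∀ i ∈ s, 0 < i) (hE : Odd (s.countP Even))
    (hO : Odd (s.countP Odd)) : (swapParity s).countP Odd = s.countP Even := by
  rw [countP_eq_card_filter, (filter_swapParity hpos hE hO).1,
    card_addToMax (map_sub_one_filter_even_ne_zero hE), card_map, countP_eq_card_filter]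

theorem countP_even_swapParity (hpos : ∀ i ∈ s, 0 < i) (hE : Odd (s.countP Even))
    (hO : Odd (s.countP Odd)) : (swapParity s).countP Even = s.countP Odd := by
  rw [countP_eq_card_filter, (filter_swapParity hpos hE hO).2, card_map, countP_eq_card_filter]

theorem sum_swapParity (hpos : ∀ i ∈ s, 0 < i) (hlt : s.countP Odd < s.countP Even) :
    (swapParity s).sum = s.sum := by
  have hE : (s.filter Even).sum = ((s.filter Even).map (· - 1)).sum + s.countP Even := by
    conv_lhs => rw [← map_add_one_map_sub_one fun i hi => hpos i (mem_of_mem_filter hi)]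
    rw [sum_map_add_one, card_map, countP_eq_card_filter]
  have hne : (s.filter Even).map (· - 1) ≠ 0 := by
    rw [Ne, map_eq_zero, ← card_eq_zero, ← countP_eq_card_filter]
    omega
  rw [swapParity, sum_add, sum_addToMax hne, sum_map_add_one, ← countP_eq_card_filter]
  conv_rhs => rw [← filter_even_add_filter_odd s, sum_add, hE]
  omega

theorem le_of_mem_swapParity {m : ℕ} (hm : Odd m) (hs : ∀ i ∈ s, m ≤ i)
    (hE : Odd (s.countP Even)) : ∀ i ∈ swapParity s, m ≤ i := by
  have hshift : ∀ x ∈ (s.filter Even).map (· - 1), m ≤ x := by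
    simp only [mem_map, mem_filter]
    rintro _ ⟨e, ⟨he, heven⟩, rfl⟩
    have hme : m ≠ e := fun h => Nat.not_even_iff_odd.2 hm (h ▸ heven)
    have := hs e he
    omega
  intro i hi
  rcases mem_add.1 hi with hi | hi
  · rcases mem_addToMax hi with rfl | hi
    · exact (hshift _ (sup_mem_of_ne_zero (map_sub_one_filter_even_ne_zero hE))).trans
        le_self_add
    · exact hshift i hi
  · obtain ⟨o, ho, rfl⟩ := mem_map.1 hi
    exact (hs o (mem_of_mem_filter ho)).trans o.le_succ

theorem swapParity_injOn :
    Set.InjOn swapParity {s | (∀ i ∈ s, 0 < i) ∧ Odd (s.countP Even) ∧ Odd (s.countP Odd)} := by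
  rintro s ⟨hs, hsE, hsO⟩ t ⟨ht, htE, htO⟩ h
  obtain ⟨hsOdd, hsEven⟩ := filter_swapParity hs hsE hsO
  obtain ⟨htOdd, htEven⟩ := filter_swapParity ht htE htO
  have hodd : s.filter Odd = t.filter Odd :=
    map_injective (add_left_injective 1) (by rw [← hsEven, ← htEven, h])
  have hcountE : s.countP Even = t.countP Even := by
    rw [← countP_odd_swapParity hs hsE hsO, h, countP_odd_swapParity ht htE htO]
  have hcountO : s.countP Odd = t.countP Odd := by
    rw [countP_eq_card_filter, hodd, countP_eq_card_filter]
  have hshift : (s.filter Even).map (· - 1) = (t.filter Even).map (· - 1) := by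
    refine eq_of_addToMax_eq (k := s.countP Even - s.countP Odd)
      (map_sub_one_filter_even_ne_zero hsE) (map_sub_one_filter_even_ne_zero htE) ?_
    rw [hcountE, hcountO, ← htOdd, ← h, hsOdd, hcountE, hcountO]
  have heven : s.filter Even = t.filter Even := by
    rw [← map_add_one_map_sub_one fun i hi => hs i (mem_of_mem_filter hi), hshift,
      map_add_one_map_sub_one fun i hi => ht i (mem_of_mem_filter hi)]
  rw [← filter_even_add_filter_odd s, ← filter_even_add_filter_odd t, heven, hodd]

end swapParity

theorem stmt_4 : ∀ m n : ℕ, 0 < m → Odd m → 0 < n → Odd n →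
    Emo m n ≤ Omo m n := by
  intro m n _ hm _ _
  refine Nat.Partition.ncard_le_ncard_of_injOn swapParity
    (P := fun s => (∀ i ∈ s, m ≤ i) ∧ Odd (s.countP Even) ∧ Odd (s.countP Odd) ∧
      s.countP Even > s.countP Odd)
    (Q := fun s => (∀ i ∈ s, m ≤ i) ∧ Odd (s.countP Even) ∧ Odd (s.countP Odd) ∧
      s.countP Odd > s.countP Even) ?_ (swapParity_injOn.mono ?_)
  · rintro s ⟨hs, hE, hO, hlt⟩
    have hpos : ∀ i ∈ s, 0 < i := fun i hi => hm.pos.trans_le (hs i hi)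
    have hbound := le_of_mem_swapParity hm hs hE
    rw [countP_even_swapParity hpos hE hO, countP_odd_swapParity hpos hE hO]
    exact ⟨⟨hbound, hO, hE, hlt⟩, fun i hi => hm.pos.trans_le (hbound i hi),
      sum_swapParity hpos hlt⟩
  · rintro s ⟨hs, hE, hO, -⟩
    exact ⟨fun i hi => hm.pos.trans_le (hs i hi), hE, hO⟩
end

section
/- Let m be an even positive integer. For every odd positive integer n, the number of partitions of n all of whose parts are at least m, in which the number of odd parts and the number of even parts are both odd and the number of even parts exceeds the number of odd parts, is at least the number of partitions of n all of whose parts are at least m, in which the number of odd parts and the number of even parts are both odd and the number of odd parts exceeds the number of even parts; that is, E_mo(n) ≥ O_mo(n). -/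
/-!
Send a partition with `a` odd parts and `b < a` even parts, `a` and `b` odd, to the partition
obtained by raising every even part by one, lowering every odd part except a largest one `o` by
one, and replacing `o` by `o + (a - 1 - b)`. The sum is unchanged, the parity of every part flips
(`a - 1 - b` is odd), so the image has `a` even and `b` odd parts, and since `m` is even no part
drops below `m`. The new part `o + (a - 1 - b)` is the largest even part of the image and
`a - 1 - b` can be read off the numbers of parts, so the map is injective.
-/

open Multiset

theorem Multiset.sup_mem_of_ne_zero_s5 {α : Type*} [LinearOrder α] [OrderBot α] {s : Multiset α}
    (hs : s ≠ 0) : s.sup ∈ s := by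
  obtain ⟨y, hy, hmax⟩ := s.exists_max_image id hs
  rwa [le_antisymm (Multiset.sup_le.2 hmax) (le_sup hy)]

theorem Multiset.map_add_one_map_sub_one_s5 {s : Multiset ℕ} (h : ∀ x ∈ s, 1 ≤ x) :
    (s.map (· - 1)).map (· + 1) = s := by
  rw [map_map]
  exact (map_congr rfl fun x hx => Nat.sub_add_cancel (h x hx)).trans (map_id' s)

theorem Multiset.sum_map_add_one_s5 (s : Multiset ℕ) : (s.map (· + 1)).sum = s.sum + card s := by
  simp [sum_map_add]

theorem Multiset.sum_map_sub_one_add_card {s : Multiset ℕ} (h : ∀ x ∈ s, 1 ≤ x) :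
    (s.map (· - 1)).sum + card s = s.sum := by
  rw [← card_map (· - 1) s, ← sum_map_add_one_s5, map_add_one_map_sub_one_s5 h]

theorem Multiset.filter_odd_add_filter_even (s : Multiset ℕ) :
    s.filter Odd + s.filter Even = s := by
  simpa only [Nat.not_odd_iff_even] using filter_add_not Odd s

theorem Multiset.filter_odd_cons_map {E O : Multiset ℕ} {c : ℕ} (hc : Even c)
    (hE : ∀ x ∈ E, Even x) (hO : ∀ x ∈ O, Odd x) :
    (c ::ₘ (E.map (· + 1) + O.map (· - 1))).filter Odd = E.map (· + 1) := by
  have hE' : E.filter (fun x => Odd (x + 1)) = E := filter_eq_self.2 fun x hx => (hE x hx).add_one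
  have hO' : O.filter (fun x => Odd (x - 1)) = 0 :=
    filter_eq_nil.2 fun x hx => Nat.not_odd_iff_even.2 (Nat.Odd.sub_odd (hO x hx) odd_one)
  simp [filter_map, Nat.not_odd_iff_even.2 hc, hE', hO']

theorem Multiset.filter_even_cons_map {E O : Multiset ℕ} {c : ℕ} (hc : Even c)
    (hE : ∀ x ∈ E, Even x) (hO : ∀ x ∈ O, Odd x) :
    (c ::ₘ (E.map (· + 1) + O.map (· - 1))).filter Even = c ::ₘ O.map (· - 1) := by
  have hE' : E.filter (fun x => Even (x + 1)) = 0 :=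
    filter_eq_nil.2 fun x hx => Nat.not_even_iff_odd.2 (hE x hx).add_one
  have hO' : O.filter (fun x => Even (x - 1)) = O :=
    filter_eq_self.2 fun x hx => Nat.Odd.sub_odd (hO x hx) odd_one
  simp [filter_map, hc, hE', hO']

def maxOddPart (s : Multiset ℕ) : ℕ := (s.filter Odd).sup

-- With truncated subtraction, `Odd (parityGap s)` alone forces `s` to have more odd than even parts.
def parityGap (s : Multiset ℕ) : ℕ := s.countP Odd - 1 - s.countP Even

def parityTransfer (s : Multiset ℕ) : Multiset ℕ :=
  (maxOddPart s + parityGap s) ::ₘ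
    ((s.filter Even).map (· + 1) + ((s.filter Odd).erase (maxOddPart s)).map (· - 1))

def parityTransferInv (t : Multiset ℕ) : Multiset ℕ :=
  ((t.filter Even).sup - (t.countP Even - 1 - t.countP Odd)) ::ₘ
    ((t.filter Odd).map (· - 1) + ((t.filter Even).erase (t.filter Even).sup).map (· + 1))

section ParityTransfer

variable {s : Multiset ℕ}

theorem odd_parityGap (hE : Odd (s.countP Even)) (hO : Odd (s.countP Odd))
    (hlt : s.countP Even < s.countP Odd) : Odd (parityGap s) :=
  Nat.Even.sub_odd (by omega) (Nat.Odd.sub_odd hO odd_one) hE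

theorem maxOddPart_mem_filter_odd (hgap : Odd (parityGap s)) : maxOddPart s ∈ s.filter Odd := by
  refine sup_mem_of_ne_zero_s5 fun h => ?_
  have := hgap.pos
  rw [parityGap, countP_eq_card_filter, h] at this
  simp at this

theorem even_maxOddPart_add_parityGap (hgap : Odd (parityGap s)) :
    Even (maxOddPart s + parityGap s) :=
  (mem_filter.1 (maxOddPart_mem_filter_odd hgap)).2.add_odd hgap

theorem filter_odd_parityTransfer (hgap : Odd (parityGap s)) :
    (parityTransfer s).filter Odd = (s.filter Even).map (· + 1) :=
  filter_odd_cons_map (even_maxOddPart_add_parityGap hgap) (fun _ hx => (mem_filter.1 hx).2)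
    fun _ hx => (mem_filter.1 (mem_of_mem_erase hx)).2

theorem filter_even_parityTransfer (hgap : Odd (parityGap s)) :
    (parityTransfer s).filter Even =
      (maxOddPart s + parityGap s) ::ₘ ((s.filter Odd).erase (maxOddPart s)).map (· - 1) :=
  filter_even_cons_map (even_maxOddPart_add_parityGap hgap) (fun _ hx => (mem_filter.1 hx).2)
    fun _ hx => (mem_filter.1 (mem_of_mem_erase hx)).2

theorem countP_even_parityTransfer (hgap : Odd (parityGap s)) :
    (parityTransfer s).countP Even = s.countP Odd := by
  rw [countP_eq_card_filter, filter_even_parityTransfer hgap, card_cons, card_map,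
    card_erase_add_one (maxOddPart_mem_filter_odd hgap), countP_eq_card_filter]

theorem countP_odd_parityTransfer (hgap : Odd (parityGap s)) :
    (parityTransfer s).countP Odd = s.countP Even := by
  rw [countP_eq_card_filter, filter_odd_parityTransfer hgap, card_map, countP_eq_card_filter]

theorem sum_parityTransfer (hgap : Odd (parityGap s)) : (parityTransfer s).sum = s.sum := by
  have hmax := maxOddPart_mem_filter_odd hgap
  have hsum := sum_map_sub_one_add_card (s := (s.filter Odd).erase (maxOddPart s))
    fun x hx => (mem_filter.1 (mem_of_mem_erase hx)).2.pos
  have hcard := card_erase_add_one hmax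
  have hgap_pos := hgap.pos
  conv_rhs => rw [← filter_odd_add_filter_even s, ← cons_erase hmax]
  simp only [parityTransfer, parityGap, sum_cons, sum_add, sum_map_add_one_s5, countP_eq_card_filter]
    at hgap_pos ⊢
  omega

theorem le_of_mem_parityTransfer {m : ℕ} (hm : Even m) (hs : ∀ x ∈ s, m ≤ x)
    (hgap : Odd (parityGap s)) : ∀ x ∈ parityTransfer s, m ≤ x := by
  simp only [parityTransfer, mem_cons, mem_add, mem_map]
  rintro x (rfl | ⟨y, hy, rfl⟩ | ⟨y, hy, rfl⟩)
  · exact (hs _ (mem_of_mem_filter (maxOddPart_mem_filter_odd hgap))).trans (Nat.le_add_right _ _)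
  · exact (hs y (mem_of_mem_filter hy)).trans y.le_succ
  · obtain ⟨hys, hy_odd⟩ := mem_filter.1 (mem_of_mem_erase hy)
    have : m < y := (hs y hys).lt_of_ne fun h => Nat.not_even_iff_odd.2 hy_odd (h ▸ hm)
    omega

theorem parityTransferInv_parityTransfer (hgap : Odd (parityGap s)) :
    parityTransferInv (parityTransfer s) = s := by
  have hmax := maxOddPart_mem_filter_odd hgap
  have hsup : ((parityTransfer s).filter Even).sup = maxOddPart s + parityGap s := by
    rw [filter_even_parityTransfer hgap, sup_cons, sup_eq_left, Multiset.sup_le]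
    intro x hx
    obtain ⟨y, hy, rfl⟩ := mem_map.1 hx
    have : y ≤ maxOddPart s := le_sup (mem_of_mem_erase hy)
    omega
  have hgap' :
      (parityTransfer s).countP Even - 1 - (parityTransfer s).countP Odd = parityGap s := by
    rw [countP_even_parityTransfer hgap, countP_odd_parityTransfer hgap, parityGap]
  rw [parityTransferInv, hsup, hgap', Nat.add_sub_cancel, filter_odd_parityTransfer hgap,
    filter_even_parityTransfer hgap, erase_cons_head,
    map_add_one_map_sub_one_s5 fun x hx => (mem_filter.1 (mem_of_mem_erase hx)).2.pos]
  conv_rhs => rw [← filter_odd_add_filter_even s, ← cons_erase hmax]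
  simp [map_map, add_comm]

theorem parityTransfer_injOn : Set.InjOn parityTransfer {s | Odd (parityGap s)} :=
  fun s hs t ht h => by
    rw [← parityTransferInv_parityTransfer hs, h, parityTransferInv_parityTransfer ht]

end ParityTransfer

theorem Nat.Partition.ncard_le_ncard_of_injOn_parts {n : ℕ} {S T : Set n.Partition}
    (f : Multiset ℕ → Multiset ℕ) (hf : ∀ p ∈ S, ∃ q ∈ T, q.parts = f p.parts)
    (hinj : Set.InjOn f (Nat.Partition.parts '' S)) : S.ncard ≤ T.ncard := by
  have hparts : Function.Injective (Nat.Partition.parts (n := n)) := fun _ _ => Nat.Partition.ext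
  rw [← Set.ncard_image_of_injective S hparts, ← Set.ncard_image_of_injective T hparts]
  refine Set.ncard_le_ncard_of_injOn f ?_ hinj ((Set.toFinite T).image _)
  rintro _ ⟨p, hp, rfl⟩
  exact hf p hp

theorem stmt_5 : ∀ m n : ℕ, 0 < m → Even m → 0 < n → Odd n →
    Omo m n ≤ Emo m n := by
  intro m n hm hme _ _
  refine Nat.Partition.ncard_le_ncard_of_injOn_parts parityTransfer ?_ ?_
  · rintro p ⟨hge, hE, hO, hlt⟩
    have hgap := odd_parityGap hE hO hlt
    have hge' := le_of_mem_parityTransfer hme hge hgap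
    refine ⟨⟨parityTransfer p.parts, fun hx => hm.trans_le (hge' _ hx),
      (sum_parityTransfer hgap).trans p.parts_sum⟩, ⟨hge', ?_⟩, rfl⟩
    rw [countP_even_parityTransfer hgap, countP_odd_parityTransfer hgap]
    exact ⟨hO, hE, hlt⟩
  · refine parityTransfer_injOn.mono ?_
    rintro _ ⟨p, ⟨-, hE, hO, hlt⟩, rfl⟩
    exact odd_parityGap hE hO hlt
end

section
/- For every integer n ≥ 7, the inequality b_{2n-4} + b_{2n-6} + b_{2n-8} + b_{2n-10} > b_{2n} holds, where b_{2k} denotes the number of partitions of 2k all of whose parts are even. -/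
/-!
Halving the parts identifies `b k` with the partition number `p(k)`. Writing `q_t(m)` for the
number of partitions of `m` into parts `≥ t`, the recurrence
`q_t(m + t) = q_t(m) + q_{t+1}(m + t)` (is `t` a part or not) gives
`p(n) = p(n-2) + q₂(n-1) + q₂(n-2) + q₃(n-3) + q₄(n-4) + q₅(n)`.
The remaining terms are bounded by injections that replace the smallest part `a` of a partition
into parts `≥ t ≥ 2` by `a - t` ones (the number of ones recovers `a`), possibly adding a marker
part: `q₂(n-1) + q₃(n-3) ≤ p(n-3)`, `q₂(n-2) ≤ p(n-4)` and `q₄(n-4) + q₅(n) < p(n-5)`, the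
last one strict because the partition `2 + 1 + ⋯ + 1` of `n - 5` is never hit.
-/

/-- `b k` is the number of partitions of `2 * k` in which every part is even. -/
noncomputable def b (k : ℕ) : ℕ :=
  Set.ncard {p : (2 * k).Partition | ∀ i ∈ p.parts, Even i}

open Multiset Set

lemma Set.ncard_add_ncard_le_of_injOn {α β : Type*} {s₁ s₂ : Set α} {u : Set β} {f g : α → β}
    (hf : MapsTo f s₁ u) (hg : MapsTo g s₂ u) (hf' : InjOn f s₁) (hg' : InjOn g s₂)
    (hd : Disjoint (f '' s₁) (g '' s₂)) (hu : u.Finite) :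
    s₁.ncard + s₂.ncard ≤ u.ncard := by
  rw [← hf'.ncard_image, ← hg'.ncard_image,
    ← ncard_union_eq hd (hu.subset hf.image_subset) (hu.subset hg.image_subset)]
  exact ncard_le_ncard (union_subset hf.image_subset hg.image_subset) hu

def Nat.Partition.double {k : ℕ} (p : k.Partition) : (2 * k).Partition where
  parts := p.parts.map (2 * ·)
  parts_pos hi := by
    obtain ⟨i, hi', rfl⟩ := Multiset.mem_map.1 hi
    exact Nat.mul_pos two_pos (p.parts_pos hi')
  parts_sum := by rw [sum_map_mul_left, Multiset.map_id', p.parts_sum]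

lemma Nat.Partition.double_injective (k : ℕ) :
    Function.Injective (Nat.Partition.double (k := k)) := fun _ _ h =>
  Nat.Partition.ext <| Multiset.map_injective (fun _ _ => Nat.eq_of_mul_eq_mul_left two_pos)
    (congrArg Nat.Partition.parts h)

lemma Nat.Partition.range_double (k : ℕ) :
    range (Nat.Partition.double (k := k)) =
      {p : (2 * k).Partition | ∀ i ∈ p.parts, Even i} := by
  ext p
  constructor
  · rintro ⟨q, rfl⟩ i hi
    obtain ⟨j, -, rfl⟩ := Multiset.mem_map.1 hi
    exact even_two_mul j
  · intro hp
    have hdouble : (p.parts.map (· / 2)).map (2 * ·) = p.parts := by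
      rw [Multiset.map_map]
      conv_rhs => rw [← Multiset.map_id p.parts]
      exact Multiset.map_congr rfl fun i hi => Nat.mul_div_cancel' (hp i hi).two_dvd
    refine ⟨⟨p.parts.map (· / 2), fun hi => ?_, ?_⟩, Nat.Partition.ext hdouble⟩
    · obtain ⟨i, hi', rfl⟩ := Multiset.mem_map.1 hi
      obtain ⟨j, rfl⟩ := hp i hi'
      have := p.parts_pos hi'
      omega
    · have h := congrArg Multiset.sum hdouble
      rw [sum_map_mul_left, Multiset.map_id', p.parts_sum] at h
      omega

lemma b_eq_card_partition (k : ℕ) : b k = Nat.card k.Partition := by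
  rw [b, ← Nat.Partition.range_double,
    ncard_range_of_injective (Nat.Partition.double_injective k)]

/-- Partitions of `m` into parts `≥ t`, as multisets (for `t = 0`, zero parts are allowed). -/
def partitionsGE (t m : ℕ) : Set (Multiset ℕ) := {s | s.sum = m ∧ ∀ i ∈ s, t ≤ i}

noncomputable def numPartitionsGE (t m : ℕ) : ℕ := (partitionsGE t m).ncard

lemma partitionsGE_anti {t t' : ℕ} (h : t ≤ t') (m : ℕ) :
    partitionsGE t' m ⊆ partitionsGE t m :=
  fun _ ⟨hsum, hge⟩ => ⟨hsum, fun i hi => h.trans (hge i hi)⟩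

lemma numPartitionsGE_one (m : ℕ) : numPartitionsGE 1 m = Nat.card m.Partition := by
  have hrange : range (Nat.Partition.parts (n := m)) = partitionsGE 1 m := by
    ext s
    exact ⟨by rintro ⟨p, rfl⟩; exact ⟨p.parts_sum, fun i hi => p.parts_pos hi⟩,
      fun ⟨hsum, hpos⟩ => ⟨⟨s, fun hi => hpos _ hi, hsum⟩, rfl⟩⟩
  rw [numPartitionsGE, ← hrange, ncard_range_of_injective fun _ _ => Nat.Partition.ext]

lemma finite_partitionsGE {t : ℕ} (ht : 0 < t) (m : ℕ) : (partitionsGE t m).Finite :=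
  (finite_range (Nat.Partition.parts (n := m))).subset fun s ⟨hsum, hge⟩ =>
    ⟨⟨s, fun hi => ht.trans_le (hge _ hi), hsum⟩, rfl⟩

lemma numPartitionsGE_add {t : ℕ} (ht : 0 < t) (m : ℕ) :
    numPartitionsGE t (m + t) = numPartitionsGE t m + numPartitionsGE (t + 1) (m + t) := by
  have hsplit : partitionsGE t (m + t) =
      cons t '' partitionsGE t m ∪ partitionsGE (t + 1) (m + t) := by
    ext s
    constructor
    · rintro ⟨hsum, hge⟩
      by_cases hts : t ∈ s
      · refine Or.inl
          ⟨s.erase t, ⟨?_, fun i hi => hge i (mem_of_mem_erase hi)⟩, cons_erase hts⟩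
        have := sum_erase hts
        omega
      · refine Or.inr ⟨hsum, fun i hi => ?_⟩
        have : i ≠ t := fun h => hts (h ▸ hi)
        have := hge i hi
        omega
    · rintro (⟨s, ⟨hsum, hge⟩, rfl⟩ | ⟨hsum, hge⟩)
      · refine ⟨by rw [sum_cons, hsum, add_comm], fun i hi => ?_⟩
        rcases mem_cons.1 hi with rfl | hi
        exacts [le_rfl, hge i hi]
      · exact ⟨hsum, fun i hi => Nat.le_of_succ_le (hge i hi)⟩
  have hdisj : Disjoint (cons t '' partitionsGE t m) (partitionsGE (t + 1) (m + t)) := by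
    rw [Set.disjoint_left]
    rintro _ ⟨s, -, rfl⟩ ⟨-, hge⟩
    exact absurd (hge t (mem_cons_self t s)) (Nat.lt_irrefl t)
  rw [numPartitionsGE, hsplit, ncard_union_eq hdisj ((finite_partitionsGE ht m).image _)
    (finite_partitionsGE (ht.trans (Nat.lt_succ_self t)) _),
    InjOn.ncard_image fun _ _ _ _ => (cons_inj_right t).1]
  rfl

section replaceMin

variable {t m : ℕ} {e s : Multiset ℕ}

lemma ne_zero_of_mem_partitionsGE (hs : s ∈ partitionsGE t m)
    (hm : 0 < m) : s ≠ 0 := by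
  rintro rfl
  exact hm.ne hs.1

noncomputable def minPart (s : Multiset ℕ) : ℕ := sInf {i | i ∈ s}

lemma minPart_mem (hs : s ≠ 0) : minPart s ∈ s :=
  Nat.sInf_mem (exists_mem_of_ne_zero hs)

lemma minPart_le {i : ℕ} (hi : i ∈ s) : minPart s ≤ i := Nat.sInf_le hi

lemma le_minPart (hs : s ∈ partitionsGE t m) (hm : 0 < m) :
    t ≤ minPart s :=
  hs.2 _ (minPart_mem (ne_zero_of_mem_partitionsGE hs hm))

lemma le_of_mem_partitionsGE (hs : s ∈ partitionsGE t m)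
    (hm : 0 < m) : t ≤ m :=
  (le_minPart hs hm).trans <|
    hs.1 ▸ le_sum_of_mem (minPart_mem (ne_zero_of_mem_partitionsGE hs hm))

noncomputable def replaceMin (t : ℕ) (e s : Multiset ℕ) : Multiset ℕ :=
  s.erase (minPart s) + replicate (minPart s - t) 1 + e

lemma mem_replaceMin {i : ℕ} (hi : i ∈ replaceMin t e s) :
    i = 1 ∨ i ∈ e ∨ minPart s ≤ i := by
  rcases mem_add.1 hi with hi | hi
  · rcases mem_add.1 hi with hi | hi
    · exact Or.inr (Or.inr (minPart_le (mem_of_mem_erase hi)))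
    · exact Or.inl (eq_of_mem_replicate hi)
  · exact Or.inr (Or.inl hi)

lemma notMem_replaceMin {t' i : ℕ} (hs : s ∈ partitionsGE t m)
    (hm : 0 < m) (hi1 : i ≠ 1) (hie : i ∉ e) (hit : i < t) : i ∉ replaceMin t' e s := by
  intro hi
  have := le_minPart hs hm
  rcases mem_replaceMin hi with h | h | h
  exacts [hi1 h, hie h, by omega]

lemma count_one_replaceMin (hs : ∀ i ∈ s, 2 ≤ i)
    (he : ∀ i ∈ e, 2 ≤ i) : count 1 (replaceMin t e s) = minPart s - t := by
  have hs1 : count 1 (s.erase (minPart s)) = 0 :=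
    count_eq_zero.2 fun h => absurd (hs 1 (mem_of_mem_erase h)) (by norm_num)
  have he1 : count 1 e = 0 := count_eq_zero.2 fun h => absurd (he 1 h) (by norm_num)
  rw [replaceMin, count_add, count_add, hs1, he1, count_replicate_self, zero_add, add_zero]

lemma replaceMin_mem_partitionsGE {n : ℕ} (ht : 0 < t)
    (hs : s ∈ partitionsGE t m) (hm : 0 < m) (he : ∀ i ∈ e, 2 ≤ i)
    (hn : m - t + e.sum = n) :
    replaceMin t e s ∈ partitionsGE 1 n := by
  have hmin := le_minPart hs hm
  have hsm := hs.1
  have hsum := sum_erase (minPart_mem (ne_zero_of_mem_partitionsGE hs hm))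
  refine ⟨?_, fun i hi => ?_⟩
  · simp only [replaceMin, sum_add, sum_replicate, smul_eq_mul, mul_one]
    omega
  · rcases mem_replaceMin hi with rfl | hi | hi
    · exact le_rfl
    · exact (he i hi).trans' one_le_two
    · exact ht.trans_le (hmin.trans hi)

lemma replaceMin_injOn (ht : 2 ≤ t) (hm : 0 < m)
    (he : ∀ i ∈ e, 2 ≤ i) : InjOn (replaceMin t e) (partitionsGE t m) := by
  intro s₁ hs₁ s₂ hs₂ h
  have hmin : minPart s₁ = minPart s₂ := by
    have := congrArg (count 1) h
    rw [count_one_replaceMin (fun i hi => ht.trans (hs₁.2 i hi)) he,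
      count_one_replaceMin (fun i hi => ht.trans (hs₂.2 i hi)) he] at this
    have := le_minPart hs₁ hm
    have := le_minPart hs₂ hm
    omega
  have herase : s₁.erase (minPart s₂) = s₂.erase (minPart s₂) := by
    simp only [replaceMin, hmin] at h
    exact add_right_cancel (add_right_cancel h)
  rw [← cons_erase (minPart_mem (ne_zero_of_mem_partitionsGE hs₁ hm)),
    ← cons_erase (minPart_mem (ne_zero_of_mem_partitionsGE hs₂ hm)), hmin, herase]

end replaceMin

lemma numPartitionsGE_two_add_numPartitionsGE_three_le {m : ℕ} (hm : 0 < m) :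
    numPartitionsGE 2 (m + 2) + numPartitionsGE 3 m ≤ numPartitionsGE 1 m := by
  have he : ∀ i ∈ ({2} : Multiset ℕ), 2 ≤ i := by simp
  have hB : partitionsGE 3 m ⊆ partitionsGE 2 m := partitionsGE_anti (by norm_num) m
  refine ncard_add_ncard_le_of_injOn (f := replaceMin 2 0) (g := replaceMin 2 {2})
    (fun s hs => replaceMin_mem_partitionsGE two_pos hs (by omega) (by simp) (by simp))
    (fun s hs => replaceMin_mem_partitionsGE two_pos (hB hs) hm he
      (by have := le_of_mem_partitionsGE hs hm; simp; omega))
    (replaceMin_injOn le_rfl (by omega) (by simp))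
    ((replaceMin_injOn le_rfl hm he).mono hB) ?_ (finite_partitionsGE one_pos m)
  -- The second image contains a part `2` and a part `1`; in the first image a part `1` forces
  -- the removed part, hence every part other than `1`, to be at least `3`.
  rw [Set.disjoint_left]
  rintro _ ⟨s₁, hs₁, rfl⟩ ⟨s₂, hs₂, h⟩
  have h₁ := le_minPart hs₁ (by omega)
  have h₂ := le_minPart hs₂ hm
  have hcount := congrArg (count 1) h
  rw [count_one_replaceMin (hB hs₂).2 he,
    count_one_replaceMin hs₁.2 (by simp)] at hcount
  have h2 : 2 ∈ replaceMin 2 0 s₁ := h ▸ mem_add.2 (Or.inr (mem_singleton_self 2))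
  rcases mem_replaceMin h2 with h2 | h2 | h2
  · omega
  · simp at h2
  · omega

lemma numPartitionsGE_four_add_numPartitionsGE_five_lt {m : ℕ} (hm : 2 ≤ m) :
    numPartitionsGE 4 (m + 1) + numPartitionsGE 5 (m + 5) < numPartitionsGE 1 m := by
  set x : Multiset ℕ := 2 ::ₘ replicate (m - 2) 1
  have hx : x ∈ partitionsGE 1 m := by
    refine ⟨?_, fun i hi => ?_⟩
    · simp only [x, sum_cons, sum_replicate, smul_eq_mul, mul_one]
      omega
    · rcases mem_cons.1 hi with rfl | hi
      · norm_num
      · exact (eq_of_mem_replicate hi).ge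
  have he : ∀ i ∈ ({3} : Multiset ℕ), 2 ≤ i := by simp
  have hx2 : 2 ∈ x := mem_cons_self 2 _
  -- Neither image contains a part `2`, so both miss `x`.
  have hC : MapsTo (replaceMin 4 {3}) (partitionsGE 4 (m + 1)) (partitionsGE 1 m \ {x}) :=
    fun s hs => ⟨replaceMin_mem_partitionsGE (by norm_num) hs (by omega) he
        (by have := le_of_mem_partitionsGE hs (by omega); simp; omega),
      fun h => notMem_replaceMin (i := 2) (e := {3}) hs (by omega) (by norm_num) (by simp)
        (by norm_num)        (by rw [Set.mem_singleton_iff.1 h]; exact hx2)⟩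
  have hE : MapsTo (replaceMin 5 0) (partitionsGE 5 (m + 5)) (partitionsGE 1 m \ {x}) :=
    fun s hs => ⟨replaceMin_mem_partitionsGE (by norm_num) hs (by omega) (by simp) (by simp),
      fun h => notMem_replaceMin (i := 2) (e := 0) hs (by omega) (by norm_num) (by simp)
        (by norm_num)        (by rw [Set.mem_singleton_iff.1 h]; exact hx2)⟩
  have hdisj : Disjoint (replaceMin 4 {3} '' partitionsGE 4 (m + 1))
      (replaceMin 5 0 '' partitionsGE 5 (m + 5)) := by
    rw [Set.disjoint_left]
    rintro _ ⟨s₁, -, rfl⟩ ⟨s₂, hs₂, h⟩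
    have h3 : 3 ∈ replaceMin 5 0 s₂ := by
      rw [h]
      exact mem_add.2 (Or.inr (mem_singleton_self 3))
    exact notMem_replaceMin hs₂ (by omega) (by norm_num) (by simp) (by norm_num) h3
  calc _ ≤ (partitionsGE 1 m \ {x}).ncard :=
        ncard_add_ncard_le_of_injOn hC hE (replaceMin_injOn (by norm_num) (by omega) he)
          (replaceMin_injOn (by norm_num) (by omega) (by simp)) hdisj
          (finite_partitionsGE one_pos m).sdiff
    _ < _ := ncard_sdiff_singleton_lt_of_mem hx (finite_partitionsGE one_pos m)

theorem stmt_10 : ∀ n : ℕ, 7 ≤ n →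
    b (n - 2) + b (n - 3) + b (n - 4) + b (n - 5) > b n := by
  intro n hn
  obtain ⟨m, rfl⟩ := Nat.exists_eq_add_of_le' hn
  simp only [b_eq_card_partition, ← numPartitionsGE_one, gt_iff_lt]
  have h₁ := numPartitionsGE_add one_pos (m + 6)
  have h₂ := numPartitionsGE_add one_pos (m + 5)
  have h₃ := numPartitionsGE_add two_pos (m + 5)
  have h₄ := numPartitionsGE_add three_pos (m + 4)
  have h₅ := numPartitionsGE_add four_pos (m + 3)
  have hA := numPartitionsGE_two_add_numPartitionsGE_three_le (m := m + 4) (by omega)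
  have hB := numPartitionsGE_two_add_numPartitionsGE_three_le (m := m + 3) (by omega)
  have hC := numPartitionsGE_four_add_numPartitionsGE_five_lt (m := m + 2) (by omega)
  simp only [add_assoc, Nat.reduceAdd, Nat.reduceSubDiff] at *
  omega
end

section
/- For every integer m ≥ 2 and every integer n ≥ m² − m + 1, the number of partitions of n having more parts congruent to 1 modulo m than parts congruent to 0 modulo m strictly exceeds the number of partitions of n having more parts congruent to 0 modulo m than parts congruent to 1 modulo m; that is, p_{1,0,m}(n) > p_{0,1,m}(n). -/
/-!
Let `d > 0` be the excess of parts `≡ 0` over parts `≡ 1 (mod m)` in a partition of `n`.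
Moving every part `r ≡ 0` to `r - (m - 1) ≡ 1` and every part `r ≡ 1` to `r + (m - 1) ≡ 0`
exchanges the two classes and lowers the sum by `(m - 1) d`; adding `(m - 1) d` parts equal to `1`
restores it. The result has exactly `m d` more parts `≡ 1` than `≡ 0`, and the original partition
can be read off from it, so this is an injection into the partitions counted by `p_{1,0,m}(n)`.
Its image misses every partition whose excess of parts `≡ 1` is exactly `1`, and for `n ≥ 3`
there is one.
-/

/-- The number of partitions of `n` having more parts congruent to `j` modulo
`m` than parts congruent to `k` modulo `m`. -/
noncomputable def pmod (j k m n : ℕ) : ℕ :=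
  Set.ncard {p : n.Partition |
    p.parts.countP (fun i => i % m = j % m) > p.parts.countP (fun i => i % m = k % m)}

namespace Nat

variable {m a : ℕ}

theorem not_modEq_one_of_modEq_zero (hm : m ≠ 1) (h : a ≡ 0 [MOD m]) : ¬a ≡ 1 [MOD m] :=
  fun h' => hm (Nat.dvd_one.1 (Nat.modEq_zero_iff_dvd.1 (h'.symm.trans h)))

theorem le_of_modEq_zero (h : a ≡ 0 [MOD m]) (ha : a ≠ 0) : m ≤ a :=
  Nat.le_of_dvd (Nat.pos_of_ne_zero ha) (Nat.modEq_zero_iff_dvd.1 h)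

theorem sub_pred_modEq_one (h : a ≡ 0 [MOD m]) (ha : a ≠ 0) : a - (m - 1) ≡ 1 [MOD m] := by
  have hma := le_of_modEq_zero h ha
  have hm : m ≠ 0 := by rintro rfl; exact ha (by simpa [Nat.ModEq] using h)
  refine Nat.ModEq.add_right_cancel' (m - 1) ?_
  rw [Nat.sub_add_cancel (by omega), Nat.add_sub_cancel' (by omega)]
  exact h.trans (Nat.modEq_zero_iff_dvd.2 dvd_rfl).symm

theorem add_pred_modEq_zero (hm : m ≠ 0) (h : a ≡ 1 [MOD m]) : a + (m - 1) ≡ 0 [MOD m] := by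
  refine (h.add_right (m - 1)).trans ?_
  rw [Nat.add_sub_cancel' (by omega)]
  exact Nat.modEq_zero_iff_dvd.2 dvd_rfl

end Nat

def swapResidue (m r : ℕ) : ℕ :=
  if r ≡ 0 [MOD m] then r - (m - 1) else if r ≡ 1 [MOD m] then r + (m - 1) else r

section swapResidue

variable {m r : ℕ}

theorem swapResidue_of_modEq_zero (h0 : r ≡ 0 [MOD m]) : swapResidue m r = r - (m - 1) :=
  if_pos h0

theorem swapResidue_of_modEq_one (hm : m ≠ 1) (h1 : r ≡ 1 [MOD m]) :
    swapResidue m r = r + (m - 1) := by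
  rw [swapResidue, if_neg fun h0 => Nat.not_modEq_one_of_modEq_zero hm h0 h1, if_pos h1]

theorem swapResidue_ne_zero (hr : r ≠ 0) : swapResidue m r ≠ 0 := by
  unfold swapResidue
  split_ifs with h0 h1
  · have := Nat.le_of_modEq_zero h0 hr; omega
  all_goals omega

theorem swapResidue_modEq_one_iff (hm : 2 ≤ m) (hr : r ≠ 0) :
    swapResidue m r ≡ 1 [MOD m] ↔ r ≡ 0 [MOD m] := by
  unfold swapResidue
  split_ifs with h0 h1
  · exact iff_of_true (Nat.sub_pred_modEq_one h0 hr) h0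
  · refine iff_of_false (fun h => ?_) h0
    exact Nat.not_modEq_one_of_modEq_zero (by omega) (Nat.add_pred_modEq_zero (by omega) h1) h
  · exact iff_of_false h1 h0

theorem swapResidue_involutive (hm : 2 ≤ m) : Function.Involutive (swapResidue m) := by
  intro r
  rcases eq_or_ne r 0 with rfl | hr
  · simp [swapResidue, Nat.ModEq]
  by_cases h0 : r ≡ 0 [MOD m]
  · have := Nat.le_of_modEq_zero h0 hr
    rw [swapResidue_of_modEq_zero h0, swapResidue_of_modEq_one (by omega)
      (Nat.sub_pred_modEq_one h0 hr)]
    omega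
  by_cases h1 : r ≡ 1 [MOD m]
  · rw [swapResidue_of_modEq_one (by omega) h1,
      swapResidue_of_modEq_zero (Nat.add_pred_modEq_zero (by omega) h1)]
    omega
  · simp only [swapResidue, if_neg h0, if_neg h1]

theorem swapResidue_modEq_zero_iff (hm : 2 ≤ m) (hr : r ≠ 0) :
    swapResidue m r ≡ 0 [MOD m] ↔ r ≡ 1 [MOD m] := by
  rw [← swapResidue_modEq_one_iff hm (swapResidue_ne_zero hr), swapResidue_involutive hm]

theorem swapResidue_add_ite (hm : 2 ≤ m) (hr : r ≠ 0) :
    swapResidue m r + (if r ≡ 0 [MOD m] then m - 1 else 0) =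
      r + (if r ≡ 1 [MOD m] then m - 1 else 0) := by
  unfold swapResidue
  split_ifs with h0 h1 h1
  · exact absurd h1 (Nat.not_modEq_one_of_modEq_zero (by omega) h0)
  · have := Nat.le_of_modEq_zero h0 hr; omega
  all_goals omega

end swapResidue

namespace Multiset

theorem countP_replicate {α : Type*} (p : α → Prop) [DecidablePred p] (k : ℕ) (a : α) :
    (replicate k a).countP p = if p a then k else 0 := by
  rw [← coe_replicate, coe_countP, List.countP_replicate]
  simp only [decide_eq_true_eq]

def swapResidues (m : ℕ) (s : Multiset ℕ) : Multiset ℕ :=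
  s.map (swapResidue m) +
    replicate ((m - 1) * (s.countP (· ≡ 0 [MOD m]) - s.countP (· ≡ 1 [MOD m]))) 1

variable {m : ℕ} {s t : Multiset ℕ}

theorem countP_modEq_zero_swapResidues (hm : 2 ≤ m) (hs : 0 ∉ s) :
    (s.swapResidues m).countP (· ≡ 0 [MOD m]) = s.countP (· ≡ 1 [MOD m]) := by
  have h1 : ¬1 ≡ 0 [MOD m] := fun h =>
    Nat.not_modEq_one_of_modEq_zero (by omega) h rfl
  rw [swapResidues, countP_add, countP_map, ← countP_eq_card_filter, countP_replicate,
    if_neg h1, add_zero]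
  exact countP_congr rfl fun r hr =>
    eq_iff_iff.2 (swapResidue_modEq_zero_iff hm (ne_of_mem_of_not_mem hr hs))

theorem countP_modEq_one_swapResidues (hm : 2 ≤ m) (hs : 0 ∉ s)
    (h : s.countP (· ≡ 1 [MOD m]) ≤ s.countP (· ≡ 0 [MOD m])) :
    (s.swapResidues m).countP (· ≡ 1 [MOD m]) =
      s.countP (· ≡ 1 [MOD m]) +
        m * (s.countP (· ≡ 0 [MOD m]) - s.countP (· ≡ 1 [MOD m])) := by
  rw [swapResidues, countP_add, countP_map, ← countP_eq_card_filter, countP_replicate,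
    if_pos (Nat.ModEq.refl 1),
    countP_congr rfl fun r hr =>
      eq_iff_iff.2 (swapResidue_modEq_one_iff hm (ne_of_mem_of_not_mem hr hs))]
  obtain ⟨k, rfl⟩ : ∃ k, m = k + 1 := ⟨m - 1, by omega⟩
  obtain ⟨d, hd⟩ := Nat.exists_eq_add_of_le h
  rw [hd, Nat.add_sub_cancel_left, Nat.add_sub_cancel]
  ring

theorem sum_map_swapResidue_add (hm : 2 ≤ m) (hs : 0 ∉ s) :
    (s.map (swapResidue m)).sum + (m - 1) * s.countP (· ≡ 0 [MOD m]) =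
      s.sum + (m - 1) * s.countP (· ≡ 1 [MOD m]) := by
  induction s using Multiset.induction_on with
  | empty => simp
  | cons r s ih =>
    have hr := swapResidue_add_ite hm (ne_of_mem_of_not_mem (mem_cons_self r s) hs)
    have := ih fun h => hs (mem_cons_of_mem h)
    simp only [map_cons, sum_cons, countP_cons, mul_add]
    split_ifs at hr ⊢ <;> omega

theorem sum_swapResidues (hm : 2 ≤ m) (hs : 0 ∉ s)
    (h : s.countP (· ≡ 1 [MOD m]) ≤ s.countP (· ≡ 0 [MOD m])) :
    (s.swapResidues m).sum = s.sum := by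
  have := sum_map_swapResidue_add hm hs
  rw [swapResidues, sum_add, sum_replicate, smul_eq_mul, mul_one, Nat.mul_sub]
  have := Nat.mul_le_mul_left (m - 1) h
  omega

theorem swapResidues_injOn (hm : 2 ≤ m) :
    Set.InjOn (swapResidues m)
      {s | 0 ∉ s ∧ s.countP (· ≡ 1 [MOD m]) ≤ s.countP (· ≡ 0 [MOD m])} := by
  rintro s ⟨hs, hs₁⟩ t ⟨ht, ht₁⟩ hst
  have h₁ : s.countP (· ≡ 1 [MOD m]) = t.countP (· ≡ 1 [MOD m]) := by
    rw [← countP_modEq_zero_swapResidues hm hs, ← countP_modEq_zero_swapResidues hm ht, hst]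
  have h₀ : s.countP (· ≡ 0 [MOD m]) = t.countP (· ≡ 0 [MOD m]) := by
    have := countP_modEq_one_swapResidues hm hs hs₁
    rw [hst, countP_modEq_one_swapResidues hm ht ht₁, h₁, add_right_inj] at this
    have := Nat.eq_of_mul_eq_mul_left (by omega) this
    omega
  rw [swapResidues, swapResidues, h₀, h₁, add_left_inj] at hst
  exact map_injective (swapResidue_involutive hm).injective hst

end Multiset

theorem Set.ncard_lt_ncard_of_injOn {α β : Type*} {s : Set α} {t : Set β} {f : α → β}
    (hf : Set.MapsTo f s t) (f_inj : Set.InjOn f s) {b : β} (hb : b ∈ t) (hb' : b ∉ f '' s)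
    (ht : t.Finite := by toFinite_tac) : s.ncard < t.ncard := by
  rw [← f_inj.ncard_image]
  exact Set.ncard_lt_ncard ((Set.ssubset_iff_of_subset hf.image_subset).2 ⟨b, hb, hb'⟩) ht

namespace Nat.Partition

variable {m n : ℕ}

theorem zero_notMem_parts (p : n.Partition) : 0 ∉ p.parts :=
  fun h => (p.parts_pos h).ne' rfl

theorem exists_countP_modEq_one_eq_succ (hm : m ≠ 1) (hn : 3 ≤ n) :
    ∃ p : n.Partition,
      p.parts.countP (· ≡ 1 [MOD m]) = p.parts.countP (· ≡ 0 [MOD m]) + 1 := by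
  have h10 : ¬1 ≡ 0 [MOD m] := fun h => Nat.not_modEq_one_of_modEq_zero hm h rfl
  by_cases h1 : n ≡ 1 [MOD m]
  · refine ⟨indiscrete n, ?_⟩
    have h0 : ¬n ≡ 0 [MOD m] := fun h => Nat.not_modEq_one_of_modEq_zero hm h h1
    simp [indiscrete_parts (show n ≠ 0 by omega), ← Multiset.cons_zero, h0, h1]
  by_cases h2 : n ≡ 2 [MOD m]
  · have h0 : n - 2 ≡ 0 [MOD m] :=
      Nat.ModEq.add_right_cancel' 2 (by rwa [Nat.sub_add_cancel (by omega)])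
    refine ⟨⟨{n - 2, 1, 1}, by simp; omega, by simp; omega⟩, ?_⟩
    simp [← Multiset.cons_zero, h0, h10, Nat.not_modEq_one_of_modEq_zero hm h0,
      Nat.ModEq.refl]
  · have h0 : ¬n - 1 ≡ 0 [MOD m] := fun h =>
      h1 (by simpa [Nat.sub_add_cancel (show 1 ≤ n by omega)] using h.add_right 1)
    have h1' : ¬n - 1 ≡ 1 [MOD m] := fun h =>
      h2 (by simpa [Nat.sub_add_cancel (show 1 ≤ n by omega)] using h.add_right 1)
    refine ⟨⟨{n - 1, 1}, by simp; omega, by simp; omega⟩, ?_⟩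
    simp [← Multiset.cons_zero, h0, h1', h10, Nat.ModEq.refl]

def swapResidues (hm : 2 ≤ m) (p : n.Partition) : n.Partition :=
  if h : p.parts.countP (· ≡ 1 [MOD m]) ≤ p.parts.countP (· ≡ 0 [MOD m]) then
    { parts := p.parts.swapResidues m
      parts_pos := fun hr => by
        rw [Multiset.swapResidues, Multiset.mem_add, Multiset.mem_map,
          Multiset.mem_replicate] at hr
        rcases hr with ⟨r, hr, rfl⟩ | ⟨-, rfl⟩
        · exact Nat.pos_of_ne_zero (swapResidue_ne_zero (p.parts_pos hr).ne')
        · exact one_pos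
      parts_sum := by
        rw [Multiset.sum_swapResidues hm p.zero_notMem_parts h, p.parts_sum] }
  else p

theorem parts_swapResidues (hm : 2 ≤ m) {p : n.Partition}
    (h : p.parts.countP (· ≡ 1 [MOD m]) ≤ p.parts.countP (· ≡ 0 [MOD m])) :
    (p.swapResidues hm).parts = p.parts.swapResidues m :=
  congrArg parts (dif_pos h)

theorem countP_modEq_one_swapResidues (hm : 2 ≤ m) {p : n.Partition}
    (h : p.parts.countP (· ≡ 1 [MOD m]) ≤ p.parts.countP (· ≡ 0 [MOD m])) :
    (p.swapResidues hm).parts.countP (· ≡ 1 [MOD m]) =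
      (p.swapResidues hm).parts.countP (· ≡ 0 [MOD m]) +
        m * (p.parts.countP (· ≡ 0 [MOD m]) - p.parts.countP (· ≡ 1 [MOD m])) := by
  rw [parts_swapResidues hm h, Multiset.countP_modEq_one_swapResidues hm p.zero_notMem_parts h,
    Multiset.countP_modEq_zero_swapResidues hm p.zero_notMem_parts]

theorem swapResidues_injOn (hm : 2 ≤ m) :
    Set.InjOn (swapResidues (n := n) hm)
      {p | p.parts.countP (· ≡ 1 [MOD m]) ≤ p.parts.countP (· ≡ 0 [MOD m])} :=
  fun p hp q hq hpq =>
    Nat.Partition.ext <| Multiset.swapResidues_injOn hm ⟨p.zero_notMem_parts, hp⟩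
      ⟨q.zero_notMem_parts, hq⟩ <| by
        rw [← parts_swapResidues hm hp, ← parts_swapResidues hm hq, hpq]

end Nat.Partition

open Nat.Partition in
theorem stmt_17 : ∀ m n : ℕ, 2 ≤ m → m ^ 2 - m + 1 ≤ n →
    pmod 1 0 m n > pmod 0 1 m n := by
  intro m n hm hn
  have h3n : 3 ≤ n := by
    have : 2 * m ≤ m ^ 2 := by nlinarith
    omega
  -- `i % m = j % m` is `i ≡ j [MOD m]` by definition.
  show Set.ncard {p : n.Partition |
      p.parts.countP (· ≡ 1 [MOD m]) < p.parts.countP (· ≡ 0 [MOD m])} <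
    Set.ncard {p : n.Partition |
      p.parts.countP (· ≡ 0 [MOD m]) < p.parts.countP (· ≡ 1 [MOD m])}
  obtain ⟨w, hw⟩ := exists_countP_modEq_one_eq_succ (show m ≠ 1 by omega) h3n
  refine Set.ncard_lt_ncard_of_injOn (b := w) (f := swapResidues hm) ?_
    ((swapResidues_injOn hm).mono (Set.ofPred_subset_ofPred.2 fun _ => le_of_lt))
    (by rw [Set.mem_ofPred_eq]; omega) ?_
  · intro p hp
    rw [Set.mem_ofPred_eq] at hp ⊢
    have hcount := countP_modEq_one_swapResidues hm hp.le
    have hpos := Nat.mul_pos (by omega : 0 < m) (Nat.sub_pos_of_lt hp)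
    omega
  · rintro ⟨p, hp, rfl⟩
    rw [Set.mem_ofPred_eq] at hp
    have hcount := countP_modEq_one_swapResidues hm hp.le
    have hm1 : m * (p.parts.countP (· ≡ 0 [MOD m]) - p.parts.countP (· ≡ 1 [MOD m])) = 1 := by
      omega
    exact absurd (Nat.eq_one_of_mul_eq_one_right hm1) (by omega)
end
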